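/- arXiv:1712.07746 — 3 statements merged into one kernel-verified Lean document; each statement's English description precedes it below -/
import Mathlib

section
/- Let M be a finitely generated monoid. Then M is graded if and only if M is finite J-above, the identity 1 is the unique invertible element of M, and 1 is the unique idempotent of M. -/
def IsGraded (M : Type*) [Monoid M] : Prop :=
  ∃ (X : Type) (_ : Finite X) (α : FreeMonoid X →* M),
    Function.Surjective α ∧ ∀ m : M, (α ⁻¹' {m}).Finite

/-- `v` is a factor of `u` if `u ∈ MvM`. A monoid is finite J-above if
every element has only finitely many factors. -/
def FiniteJAbove (M : Type*) [Monoid M] : Prop :=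
  ∀ u : M, {v : M | ∃ p q : M, u = p * v * q}.Finite


/-!
A grading forces `p * t = p → t = 1`: otherwise the words `w * c ^ n` for lifts `w`, `c` of `p`, `t`
would be infinitely many preimages of `p`. This kills nontrivial idempotents, and, applied in the
free monoid to a lift of `u * v = 1`, nontrivial units; finite J-aboveness holds since factors of
`u` are images of factors of the finitely many words over `u`.

Conversely, if units and idempotents are trivial then so are one-sided inverses, and in a finite
J-above monoid some power of `t` is idempotent whenever `p * t = p`, so again `t = 1`. Taking
generators different from `1`, the prefixes of a word over `m` then evaluate to pairwise distinct
factors of `m`, which bounds the length of the word by the number of factors of `m`.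
-/

section

variable {M : Type*} [Monoid M]

def factorSet (u : M) : Set M := {v | ∃ p q : M, u = p * v * q}

theorem mul_pow_eq_self {p t : M} (h : p * t = p) (n : ℕ) : p * t ^ n = p := by
  induction n with
  | zero => rw [pow_zero, mul_one]
  | succ n ih => rw [pow_succ, ← mul_assoc, ih, h]

namespace FreeMonoid

variable {X : Type*}

theorem length_pow (c : FreeMonoid X) (n : ℕ) : (c ^ n).length = n * c.length := by
  induction n with
  | zero => rw [pow_zero, length_one, zero_mul]
  | succ n ih => rw [pow_succ, length_mul, ih, Nat.succ_mul]

theorem finite_factorSet (w : FreeMonoid X) : (factorSet w).Finite := by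
  refine (w.toList.sublists.finite_toSet.preimage toList.injective.injOn).subset ?_
  rintro v ⟨p, q, rfl⟩
  simpa only [Set.mem_preimage, Set.mem_ofPred_eq, List.mem_sublists, toList_mul]
    using (List.infix_append _ _ _).sublist

theorem eq_one_of_map_mul_eq_map {α : FreeMonoid X →* M} (hα : ∀ m, (α ⁻¹' {m}).Finite)
    {w c : FreeMonoid X} (h : α (w * c) = α w) : c = 1 := by
  by_contra hc
  have hc_len : 0 < c.length := Nat.pos_of_ne_zero (mt length_eq_zero.mp hc)
  have hmem : ∀ n : ℕ, w * c ^ n ∈ α ⁻¹' {α w} := fun n => by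
    rw [Set.mem_preimage, Set.mem_singleton_iff, map_mul, map_pow,
      mul_pow_eq_self (by rwa [← map_mul]) n]
  have hinj : Function.Injective fun n : ℕ => w * c ^ n := fun m n hmn => by
    have hlen := congrArg length hmn
    simp only [length_mul, length_pow] at hlen
    exact Nat.eq_of_mul_eq_mul_right hc_len (by omega)
  exact Set.infinite_of_injective_forall_mem hinj hmem (hα _)

end FreeMonoid

namespace IsGraded

theorem finiteJAbove (h : IsGraded M) : FiniteJAbove M := by
  obtain ⟨X, _, α, hsurj, hfib⟩ := h
  intro u
  refine (((hfib u).biUnion fun w _ => w.finite_factorSet).image α).subset ?_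
  rintro v ⟨p, q, hpvq⟩
  obtain ⟨wp, rfl⟩ := hsurj p
  obtain ⟨wv, rfl⟩ := hsurj v
  obtain ⟨wq, rfl⟩ := hsurj q
  refine ⟨wv, Set.mem_biUnion (x := wp * wv * wq) ?_ ⟨wp, wq, rfl⟩, rfl⟩
  rw [Set.mem_preimage, Set.mem_singleton_iff, map_mul, map_mul, hpvq]

theorem eq_one_of_mul_eq_self (h : IsGraded M) {p t : M} (hpt : p * t = p) : t = 1 := by
  obtain ⟨X, _, α, hsurj, hfib⟩ := h
  obtain ⟨wp, rfl⟩ := hsurj p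
  obtain ⟨wt, rfl⟩ := hsurj t
  rw [FreeMonoid.eq_one_of_map_mul_eq_map hfib (w := wp) (c := wt) (by rwa [map_mul]), map_one]

theorem eq_one_of_mul_eq_one (h : IsGraded M) {u v : M} (huv : u * v = 1) : u = 1 := by
  obtain ⟨X, _, α, hsurj, hfib⟩ := h
  obtain ⟨wu, rfl⟩ := hsurj u
  obtain ⟨wv, rfl⟩ := hsurj v
  have hw : wu * wv = 1 :=
    FreeMonoid.eq_one_of_map_mul_eq_map hfib (w := 1) (by rw [one_mul, map_mul, huv, map_one])
  rw [show wu = 1 from eq_one_of_mul_right' hw, map_one]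

end IsGraded

theorem eq_one_of_mul_eq_one_of_isIdempotentElem (hunit : ∀ u : M, IsUnit u → u = 1)
    (hid : ∀ e : M, IsIdempotentElem e → e = 1) {u v : M} (huv : u * v = 1) : u = 1 := by
  have hvu : v * u = 1 := hid _ <| by
    rw [IsIdempotentElem, mul_assoc, ← mul_assoc u, huv, one_mul]
  exact hunit u (isUnit_iff_exists.mpr ⟨v, huv, hvu⟩)

theorem exists_isIdempotentElem_pow {t : M} (h : (Set.range fun n : ℕ => t ^ n).Finite) :
    ∃ n ≠ 0, IsIdempotentElem (t ^ n) := by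
  obtain ⟨a, b, hab, hba⟩ := h.exists_lt_map_eq_of_forall_mem (f := fun n : ℕ => t ^ n)
    (fun n => Set.mem_range_self n)
  obtain ⟨d, hd, rfl⟩ : ∃ d, 0 < d ∧ b = a + d := ⟨b - a, by omega, by omega⟩
  have hperiod : ∀ k, t ^ (a + k * d) = t ^ a := fun k => by
    induction k with
    | zero => rw [zero_mul, add_zero]
    | succ k ih => rw [show a + (k + 1) * d = a + k * d + d by ring, pow_add, ih, ← pow_add, ← hba]
  -- Any multiple `n ≥ a` of the period `d` makes `t ^ n` idempotent.
  have han : a < (a + 1) * d := Nat.lt_of_lt_of_le a.lt_succ_self (Nat.le_mul_of_pos_right _ hd)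
  refine ⟨(a + 1) * d, by omega, ?_⟩
  calc t ^ ((a + 1) * d) * t ^ ((a + 1) * d)
      = t ^ (a + (a + 1) * d) * t ^ ((a + 1) * d - a) := by
        rw [← pow_add, ← pow_add]; congr 1; generalize (a + 1) * d = n at han ⊢; omega
    _ = t ^ ((a + 1) * d) := by
        rw [hperiod, ← pow_add]; congr 1; generalize (a + 1) * d = n at han ⊢; omega

theorem eq_one_of_mul_eq_self_of_finiteJAbove (hJ : FiniteJAbove M)
    (hinv : ∀ u v : M, u * v = 1 → u = 1) (hid : ∀ e : M, IsIdempotentElem e → e = 1)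
    {p t : M} (hpt : p * t = p) : t = 1 := by
  have hpow : (Set.range fun n : ℕ => t ^ n).Finite :=
    (hJ p).subset <| Set.range_subset_iff.mpr fun n => ⟨p, 1, by rw [mul_one, mul_pow_eq_self hpt]⟩
  obtain ⟨n, hn, hidem⟩ := exists_isIdempotentElem_pow hpow
  obtain ⟨k, rfl⟩ := Nat.exists_eq_succ_of_ne_zero hn
  exact hinv t (t ^ k) (by rw [← pow_succ']; exact hid _ hidem)

theorem List.prod_ne_one_of_forall_ne_one (hinv : ∀ u v : M, u * v = 1 → u = 1) {l : List M}
    (hl : ∀ x ∈ l, x ≠ 1) (hne : l ≠ []) : l.prod ≠ 1 := by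
  obtain ⟨x, l, rfl⟩ := List.exists_cons_of_ne_nil hne
  rw [List.prod_cons]
  exact fun h => hl x List.mem_cons_self (hinv x _ h)

theorem List.injOn_prod_take (hJ : FiniteJAbove M)
    (hinv : ∀ u v : M, u * v = 1 → u = 1) (hid : ∀ e : M, IsIdempotentElem e → e = 1)
    {l : List M} (hl : ∀ x ∈ l, x ≠ 1) : Set.InjOn (fun i => (l.take i).prod) (Set.Iic l.length) := by
  suffices h : ∀ i j, i < j → j ≤ l.length → (l.take i).prod ≠ (l.take j).prod by
    intro i _ j hj hij
    by_contra hne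
    rcases Nat.lt_or_gt_of_ne hne with hlt | hlt
    · exact h i j hlt hj hij
    · exact h j i hlt ‹i ∈ Set.Iic l.length› hij.symm
  intro i j hij hj heq
  set c := (l.drop i).take (j - i)
  have htake : l.take j = l.take i ++ c := by rw [← List.take_add]; congr 1; omega
  have hc : c ≠ [] := List.ne_nil_of_length_pos (by simp [c]; omega)
  refine List.prod_ne_one_of_forall_ne_one hinv
    (fun x hx => hl x (List.drop_subset _ _ (List.take_subset _ _ hx))) hc ?_
  refine eq_one_of_mul_eq_self_of_finiteJAbove hJ hinv hid (p := (l.take i).prod) ?_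
  rw [← List.prod_append, ← htake, heq]

theorem List.length_lt_ncard_factorSet (hJ : FiniteJAbove M)
    (hinv : ∀ u v : M, u * v = 1 → u = 1) (hid : ∀ e : M, IsIdempotentElem e → e = 1)
    {l : List M} (hl : ∀ x ∈ l, x ≠ 1) : l.length < (factorSet l.prod).ncard := by
  have hle := Set.ncard_le_ncard_of_injOn (t := factorSet l.prod) (fun i => (l.take i).prod)
    (fun i _ => ⟨1, (l.drop i).prod, by rw [one_mul, ← List.prod_append, List.take_append_drop]⟩)
    (List.injOn_prod_take hJ hinv hid hl) (hJ l.prod)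
  rwa [← Finset.coe_Iic, Set.ncard_coe_finset, Nat.card_Iic, Nat.succ_le_iff] at hle

theorem FreeMonoid.finite_preimage_lift (hJ : FiniteJAbove M)
    (hinv : ∀ u v : M, u * v = 1 → u = 1) (hid : ∀ e : M, IsIdempotentElem e → e = 1)
    {X : Type*} [Finite X] {f : X → M} (hf : ∀ x, f x ≠ 1) (m : M) :
    (FreeMonoid.lift f ⁻¹' {m}).Finite := by
  refine ((List.finite_length_lt X (factorSet m).ncard).preimage toList.injective.injOn).subset ?_
  rintro w rfl
  have hlen := List.length_lt_ncard_factorSet hJ hinv hid (l := w.toList.map f)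
    (by simpa only [List.mem_map, forall_exists_index, and_imp, forall_apply_eq_imp_iff₂] using
      fun x _ => hf x)
  rwa [List.length_map, ← FreeMonoid.lift_apply] at hlen

theorem Monoid.FG.exists_lift_surjective [Monoid.FG M] :
    ∃ (X : Type) (_ : Finite X) (f : X → M), (∀ x, f x ≠ 1) ∧
      Function.Surjective (FreeMonoid.lift f) := by
  obtain ⟨S, hS, hfin⟩ := Monoid.fg_iff.mp ‹_›
  obtain ⟨n, ⟨e⟩⟩ := hfin.sdiff (t := {1}) |>.exists_equiv_fin
  refine ⟨Fin n, inferInstance, fun i => e.symm i, fun i => (e.symm i).2.2, ?_⟩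
  rw [← MonoidHom.mrange_eq_top, FreeMonoid.mrange_lift, ← hS, ← Submonoid.closure_insert_one S,
    ← Set.insert_sdiff_singleton, Submonoid.closure_insert_one]
  congr 1
  ext x
  exact ⟨fun ⟨i, hi⟩ => hi ▸ (e.symm i).2, fun hx => ⟨e ⟨x, hx⟩, by simp⟩⟩

theorem isGraded_of_finiteJAbove [Monoid.FG M] (hJ : FiniteJAbove M)
    (hunit : ∀ u : M, IsUnit u → u = 1) (hid : ∀ e : M, IsIdempotentElem e → e = 1) :
    IsGraded M := by
  obtain ⟨X, _, f, hf, hsurj⟩ := Monoid.FG.exists_lift_surjective (M := M)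
  exact ⟨X, inferInstance, FreeMonoid.lift f, hsurj, FreeMonoid.finite_preimage_lift hJ
    (fun _ _ => eq_one_of_mul_eq_one_of_isIdempotentElem hunit hid) hid hf⟩

end

theorem graded_iff_finiteJAbove_unique_unit_unique_idempotent
    (M : Type*) [Monoid M] [Monoid.FG M] :
    IsGraded M ↔
      (FiniteJAbove M ∧ (∀ u : M, (∃ v : M, u * v = 1 ∧ v * u = 1) → u = 1) ∧
        ∀ u : M, u * u = u → u = 1) := by
  refine ⟨fun h => ⟨h.finiteJAbove, fun _ ⟨_, huv, _⟩ => h.eq_one_of_mul_eq_one huv,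
    fun _ => h.eq_one_of_mul_eq_self⟩, fun ⟨hJ, hunit, hid⟩ => ?_⟩
  exact isGraded_of_finiteJAbove hJ (fun u hu => hunit u (isUnit_iff_exists.mp hu)) hid
end

section
/- Let F be a free group and let M be a finitely generated submonoid of F. Then M is graded if and only if M is finite J-above. -/
/-!
In a graded monoid the factors of `u` are images of subwords of the finitely many words
representing `u`. Conversely, take generators different from `1` in a left-cancellative monoid
without nontrivial units; then only the empty word represents `1`. The prefixes of a word `w`
representing `u` represent factors of `u`, and two of them representing the same element would
differ by a nonempty word representing `1`, so `w` is shorter than the number of factors of `u`.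
A submonoid of a free group is cancellative, and its units are factors of `1`; under finite
J-aboveness they form a finite subgroup of a torsion-free group, hence are trivial.
-/

open Function FreeMonoid

section

variable {M : Type*}

def Monoid.factors [Monoid M] (u : M) : Set M :=
  {v | ∃ p q : M, u = p * v * q}

theorem FreeMonoid.finite_length_le (X : Type*) [Finite X] (n : ℕ) :
    {w : FreeMonoid X | w.length ≤ n}.Finite :=
  List.finite_length_le X n

theorem IsGraded.finiteJAbove_s3 [Monoid M] (h : IsGraded M) : FiniteJAbove M := by
  obtain ⟨X, _, α, hsurj, hfib⟩ := h
  intro u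
  obtain ⟨L, hL⟩ := ((hfib u).image FreeMonoid.length).bddAbove
  refine ((FreeMonoid.finite_length_le X L).image α).subset ?_
  rintro v ⟨p, q, rfl⟩
  obtain ⟨a, rfl⟩ := hsurj p
  obtain ⟨b, rfl⟩ := hsurj v
  obtain ⟨c, rfl⟩ := hsurj q
  have hlen : (a * b * c).length ≤ L := hL ⟨a * b * c, by simp, rfl⟩
  simp only [FreeMonoid.length_mul] at hlen
  exact ⟨b, by simp only [Set.mem_ofPred_eq]; omega, rfl⟩

theorem FiniteJAbove.finite_units [Monoid M] (h : FiniteJAbove M) : Finite Mˣ :=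
  have : Finite (Monoid.factors (1 : M)) := (h 1).to_subtype
  Finite.of_injective (fun u : Mˣ => (⟨u, ↑u⁻¹, 1, by simp⟩ : Monoid.factors (1 : M)))
    fun _ _ huv => Units.ext (congrArg Subtype.val huv)

theorem Units.subsingleton_of_finite [Monoid M] [IsMulTorsionFree M] [Finite Mˣ] :
    Subsingleton Mˣ :=
  have : IsMulTorsionFree Mˣ := Units.val_injective.isMulTorsionFree (Units.coeHom M)
  ⟨fun a b => (isOfFinOrder_of_finite a).eq_one'.trans (isOfFinOrder_of_finite b).eq_one'.symm⟩

theorem Monoid.exists_surjective_freeMonoid_map_ne_one [Monoid M] [Monoid.FG M] :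
    ∃ (X : Type) (_ : Finite X) (α : FreeMonoid X →* M),
      Surjective α ∧ ∀ x, α (of x) ≠ 1 := by
  obtain ⟨X, _, φ, hφ⟩ := Monoid.fg_iff_exists_freeGroup_hom_surjective_finite.mp ‹_›
  refine ⟨{x // φ (of x) ≠ 1}, inferInstance, lift fun x => φ (of x.1), fun m => ?_,
    fun x => by simpa using x.2⟩
  obtain ⟨w, rfl⟩ := hφ m
  induction w using FreeMonoid.inductionOn' with
  | one => exact ⟨1, by simp⟩
  | of_mul x w ih =>
    obtain ⟨v, hv⟩ := ih
    by_cases hx : φ (of x) = 1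
    · exact ⟨v, by simp [hv, hx]⟩
    · exact ⟨of ⟨x, hx⟩ * v, by simp [hv]⟩

namespace FreeMonoid

variable {X : Type*} [Monoid M] (α : FreeMonoid X →* M)

theorem eq_one_of_map_eq_one [IsDedekindFiniteMonoid M] [Subsingleton Mˣ]
    (hα : ∀ x, α (of x) ≠ 1) {w : FreeMonoid X} (hw : α w = 1) : w = 1 := by
  cases w with
  | one => rfl
  | of_mul x w =>
    rw [map_mul] at hw
    exact absurd (isUnit_iff_eq_one.mp (.of_mul_eq_one _ hw)) (hα x)

variable [IsLeftCancelMul M]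

theorem injective_map_ofList_take (hα : ∀ w, α w = 1 → w = 1) (w : FreeMonoid X) :
    Injective fun k : Fin (w.length + 1) => α (ofList (w.toList.take k)) := by
  suffices key : ∀ i n, i + n ≤ w.length →
      α (ofList (w.toList.take i)) = α (ofList (w.toList.take (i + n))) → n = 0 by
    intro i j hij
    wlog hle : i ≤ j generalizing i j
    · exact (this hij.symm (le_of_not_ge hle)).symm
    obtain ⟨n, hn⟩ := Nat.exists_eq_add_of_le hle
    have hj : i + n ≤ w.length := hn ▸ Nat.le_of_lt_succ j.2
    exact Fin.ext (by rw [hn, key i n hj (hn ▸ hij), add_zero])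
  intro i n hn heq
  change i + n ≤ w.toList.length at hn
  rw [List.take_add, ofList_append, map_mul, left_eq_mul] at heq
  have := congrArg length (hα _ heq)
  simp only [length, toList_ofList, List.length_take, List.length_drop, toList_one,
    List.length_nil, min_eq_zero] at this
  omega

theorem length_lt_card_factors (hα : ∀ w, α w = 1 → w = 1) (w : FreeMonoid X)
    [Finite (Monoid.factors (α w))] : w.length < Nat.card (Monoid.factors (α w)) := by
  have hmem : ∀ k, α (ofList (w.toList.take k)) ∈ Monoid.factors (α w) := fun k =>
    ⟨1, α (ofList (w.toList.drop k)), by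
      rw [one_mul, ← map_mul, ← ofList_append, List.take_append_drop, ofList_toList]⟩
  simpa using Nat.card_le_card_of_injective
    (fun k : Fin (w.length + 1) => (⟨_, hmem k⟩ : Monoid.factors (α w)))
    fun i j hij => injective_map_ofList_take α hα w (congrArg Subtype.val hij)

end FreeMonoid

theorem FiniteJAbove.isGraded [Monoid M] [IsLeftCancelMul M] [Monoid.FG M] [Subsingleton Mˣ]
    (h : FiniteJAbove M) : IsGraded M := by
  obtain ⟨X, _, α, hsurj, hα⟩ := Monoid.exists_surjective_freeMonoid_map_ne_one (M := M)
  refine ⟨X, ‹_›, α, hsurj, fun u => ?_⟩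
  have : Finite (Monoid.factors u) := (h u).to_subtype
  refine (FreeMonoid.finite_length_le X (Nat.card (Monoid.factors u))).subset ?_
  rintro w rfl
  exact (length_lt_card_factors α (fun _ => eq_one_of_map_eq_one α hα) w).le

end

theorem graded_iff_finiteJAbove_of_submonoid_of_freeGroup
    (F : Type*) [Group F] (hF : ∃ ι : Type _, Nonempty (F ≃* FreeGroup ι))
    (M : Submonoid F) (hM : M.FG) :
    IsGraded M ↔ FiniteJAbove M := by
  obtain ⟨ι, ⟨φ⟩⟩ := hF
  have : IsMulTorsionFree F := φ.injective.isMulTorsionFree φ.toMonoidHom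
  have : IsMulTorsionFree M := Subtype.val_injective.isMulTorsionFree M.subtype
  have : Monoid.FG M := (Monoid.fg_iff_submonoid_fg M).mpr hM
  refine ⟨IsGraded.finiteJAbove_s3, fun h => ?_⟩
  have := h.finite_units
  have := Units.subsingleton_of_finite (M := M)
  exact h.isGraded
end

section
/- Let M be a graded monoid and let S′ ⊆ M \ {1} be any generating set of M (as a monoid). Then every element of M can be written as a product of elements of S′ in only finitely many ways: for every g ∈ M, the set of finite sequences (s₁,…,sₙ) with each sᵢ ∈ S′ and s₁⋯sₙ = g is finite. -/
/-!
In a free monoid over a finite alphabet, a factorization of a word `u` into nonempty words has at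
most `u.length` factors, each of length at most `u.length`, so there are finitely many of them.
Choosing a section `w` of `α : X* → M`, a factorization `s₁ ⋯ sₙ = g` into nonidentity elements
lifts injectively to the factorization `w s₁ ⋯ w sₙ` into nonempty words of some word in the finite
fibre `α⁻¹(g)`. Factorizations over `S' ⊆ M \ {1}` are among these.
-/

def nontrivialFactorizations {M : Type*} [Monoid M] (g : M) : Set (List M) :=
  {l | 1 ∉ l ∧ l.prod = g}

def HasFiniteFactorizations (M : Type*) [Monoid M] : Prop :=
  ∀ g : M, (nontrivialFactorizations g).Finite

lemma Set.Finite.setOf_list_forall_mem_length_le {α : Type*} {T : Set α} (hT : T.Finite)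
    (n : ℕ) : {l : List α | (∀ x ∈ l, x ∈ T) ∧ l.length ≤ n}.Finite := by
  have : Finite T := hT
  refine ((List.finite_length_le T n).image (List.map Subtype.val)).subset ?_
  rintro l ⟨hmem, hlen⟩
  exact ⟨l.pmap Subtype.mk hmem, by simpa using hlen, by simp [List.map_pmap]⟩

namespace FreeMonoid

variable {X : Type*}

lemma length_list_prod (L : List (FreeMonoid X)) : L.prod.length = (L.map length).sum := by
  simp only [length, toList_prod, List.length_flatten, List.map_map]
  rfl

lemma hasFiniteFactorizations [Finite X] : HasFiniteFactorizations (FreeMonoid X) := by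
  intro u
  refine ((List.finite_length_le X u.length).image ofList
    |>.setOf_list_forall_mem_length_le u.length).subset ?_
  rintro L ⟨hL1, rfl⟩
  have hsum := length_list_prod L
  refine ⟨fun v hv => ⟨v.toList, ?_, rfl⟩, ?_⟩
  · exact hsum ▸ List.le_sum_of_mem (List.mem_map_of_mem (f := length) hv)
  · have hpos : ∀ n ∈ L.map length, 1 ≤ n := by
      simp only [List.mem_map]
      rintro _ ⟨v, hv, rfl⟩
      exact Nat.one_le_iff_ne_zero.2 fun h => hL1 (length_eq_zero.1 h ▸ hv)
    simpa [hsum] using List.length_le_sum_of_one_le _ hpos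

end FreeMonoid

lemma HasFiniteFactorizations.of_surjective {N M : Type*} [Monoid N] [Monoid M]
    (hN : HasFiniteFactorizations N) (α : N →* M) (hsurj : Function.Surjective α)
    (hfib : ∀ m : M, (α ⁻¹' {m}).Finite) : HasFiniteFactorizations M := by
  intro g
  set w := Function.surjInv hsurj
  have hαw : ∀ m, α (w m) = m := Function.surjInv_eq hsurj
  have hw1 : ∀ m, w m = 1 → m = 1 := fun m h => by rw [← hαw m, h, map_one]
  have hlift : nontrivialFactorizations g ⊆
      List.map w ⁻¹' ⋃ u ∈ α ⁻¹' {g}, nontrivialFactorizations u := by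
    rintro l ⟨hl1, rfl⟩
    refine Set.mem_biUnion (x := (l.map w).prod) ?_ ⟨?_, rfl⟩
    · simp [map_list_prod, List.map_map, Function.comp_def, hαw]
    · simp only [List.mem_map, not_exists, not_and]
      exact fun m hm h => hl1 (hw1 m h ▸ hm)
  refine ((hfib g).biUnion fun u _ => hN u).preimage ?_ |>.subset hlift
  exact (List.map_injective_iff.2 (Function.injective_surjInv hsurj)).injOn

lemma IsGraded.hasFiniteFactorizations {M : Type*} [Monoid M] (hM : IsGraded M) :
    HasFiniteFactorizations M := by
  obtain ⟨X, _, α, hsurj, hfib⟩ := hM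
  exact FreeMonoid.hasFiniteFactorizations.of_surjective α hsurj hfib

theorem graded_finitely_many_factorizations_over_any_generating_set_general
    (M : Type*) [Monoid M] (hM : IsGraded M)
    (S' : Set M) (hS'1 : (1 : M) ∉ S') :
    ∀ g : M, {l : List M | (∀ x ∈ l, x ∈ S') ∧ l.prod = g}.Finite := fun g =>
  (hM.hasFiniteFactorizations g).subset fun _ ⟨hS', hprod⟩ => ⟨fun h1 => hS'1 (hS' 1 h1), hprod⟩

theorem graded_finitely_many_factorizations_over_any_generating_set
    (M : Type*) [Monoid M] (hM : IsGraded M)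
    (S' : Set M) (hS'1 : (1 : M) ∉ S') (hS'gen : Submonoid.closure S' = ⊤) :
    ∀ g : M, {l : List M | (∀ x ∈ l, x ∈ S') ∧ l.prod = g}.Finite :=
  graded_finitely_many_factorizations_over_any_generating_set_general M hM S' hS'1
end
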